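/- For a nonzero vector k ∈ ℤ³ and λ := ±|k|, the eigenvalue equation curl v = λ v admits a nonzero smooth solution on the flat 3-torus 𝕋³ = (ℝ/2πℤ)³; conversely, every nonzero real number λ for which curl has a nonzero eigenfield on 𝕋³ is of the form λ = ±|k| for some k ∈ ℤ³ \ {0}. In particular every eigenvalue satisfies λ² ∈ ℤ. -/

import Mathlib

open Real

/-- Partial derivative of a scalar function on `ℝ³` in the `i`-th coordinate direction. -/
noncomputable def pderiv3 (f : (Fin 3 → ℝ) → ℝ) (i : Fin 3) (x : Fin 3 → ℝ) : ℝ :=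
  fderiv ℝ f x (Pi.single i 1)

/-- The curl of a vector field on `ℝ³`. -/
noncomputable def curl3 (v : (Fin 3 → ℝ) → Fin 3 → ℝ) (x : Fin 3 → ℝ) : Fin 3 → ℝ :=
  ![pderiv3 (fun y => v y 2) 1 x - pderiv3 (fun y => v y 1) 2 x,
    pderiv3 (fun y => v y 0) 2 x - pderiv3 (fun y => v y 2) 0 x,
    pderiv3 (fun y => v y 1) 0 x - pderiv3 (fun y => v y 0) 1 x]

/-- `v` is a vector field on the flat torus `𝕋³ = (ℝ/2πℤ)³`: a smooth `2π`-periodic map. -/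
def IsTorusField (v : (Fin 3 → ℝ) → Fin 3 → ℝ) : Prop :=
  ContDiff ℝ (⊤ : ℕ∞) v ∧
    ∀ x : Fin 3 → ℝ, ∀ m : Fin 3 → ℤ, v (fun i => x i + 2 * π * (m i)) = v x

noncomputable def LK (K : Fin 3 → ℝ) : (Fin 3 → ℝ) →L[ℝ] ℝ :=
  ∑ j, (K j) • (ContinuousLinearMap.proj j)

lemma LK_apply (K y : Fin 3 → ℝ) : LK K y = ∑ j, K j * y j := by
  simp [LK, ContinuousLinearMap.sum_apply]

lemma LK_single (K : Fin 3 → ℝ) (i : Fin 3) : LK K (Pi.single i 1) = K i := by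
  simp [LK_apply, Pi.single_apply, Finset.sum_ite_eq', mul_comm]

lemma lin_eq (K : Fin 3 → ℝ) : (fun y : Fin 3 → ℝ => ∑ l, K l * y l) = ⇑(LK K) := by
  funext y; rw [LK_apply]

lemma pderiv3_trig (K a b : Fin 3 → ℝ) (i j : Fin 3) (x : Fin 3 → ℝ) :
    pderiv3 (fun y => a i * Real.cos (∑ l, K l * y l) + b i * Real.sin (∑ l, K l * y l)) j x
      = (-(a i * Real.sin (∑ l, K l * x l)) + b i * Real.cos (∑ l, K l * x l)) * K j := by
  have hl : HasFDerivAt (fun y : Fin 3 → ℝ => ∑ l, K l * y l) (LK K) x := by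
    rw [lin_eq]; exact (LK K).hasFDerivAt
  have h := ((hl.cos).const_mul (a i)).add ((hl.sin).const_mul (b i))
  have h' : HasFDerivAt (fun y => a i * Real.cos (∑ l, K l * y l) + b i * Real.sin (∑ l, K l * y l)) _ x := h
  rw [pderiv3, h'.fderiv]
  simp [LK_single]; ring

lemma exist_field (k : Fin 3 → ℤ) (lam : ℝ) (hsq : lam ^ 2 = ∑ i, ((k i : ℝ)) ^ 2)
    (hlam : lam ≠ 0) (a0 a1 a2 : ℝ)
    (hdot : (k 0 : ℝ) * a0 + (k 1 : ℝ) * a1 + (k 2 : ℝ) * a2 = 0)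
    (ha : ¬(a0 = 0 ∧ a1 = 0 ∧ a2 = 0)) :
    ∃ v : (Fin 3 → ℝ) → Fin 3 → ℝ,
      IsTorusField v ∧ v ≠ 0 ∧ ∀ x, curl3 v x = lam • v x := by
  set K : Fin 3 → ℝ := fun i => (k i : ℝ) with hK
  have hK0 : K 0 = (k 0 : ℝ) := rfl
  have hK1 : K 1 = (k 1 : ℝ) := rfl
  have hK2 : K 2 = (k 2 : ℝ) := rfl
  set a : Fin 3 → ℝ := ![a0, a1, a2] with haa
  set b : Fin 3 → ℝ := ![-(K 1 * a2 - K 2 * a1) / lam, -(K 2 * a0 - K 0 * a2) / lam,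
      -(K 0 * a1 - K 1 * a0) / lam] with hb
  have hdot' : K 0 * a0 + K 1 * a1 + K 2 * a2 = 0 := hdot
  have hsum : K 0 ^ 2 + K 1 ^ 2 + K 2 ^ 2 = lam ^ 2 := by
    rw [hsq, Fin.sum_univ_three]; try rfl
  refine ⟨fun x i => a i * Real.cos (∑ l, K l * x l) + b i * Real.sin (∑ l, K l * x l),
    ⟨?_, ?_⟩, ?_, ?_⟩
  · -- smooth
    apply contDiff_pi.2
    intro i
    have hlin : ContDiff ℝ (⊤ : ℕ∞) (fun y : Fin 3 → ℝ => ∑ l, K l * y l) := by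
      rw [lin_eq]; exact (LK K).contDiff
    exact (contDiff_const.mul (Real.contDiff_cos.comp hlin)).add
      (contDiff_const.mul (Real.contDiff_sin.comp hlin))
  · -- periodic
    intro x m
    funext i
    have hθ : ∑ l, K l * (x l + 2 * π * (m l)) =
        ∑ l, K l * x l + ((∑ l, k l * m l : ℤ) : ℝ) * (2 * π) := by
      push_cast
      rw [Finset.sum_mul, ← Finset.sum_add_distrib]
      refine Finset.sum_congr rfl fun l _ => by ring
    simp only [hθ, Real.cos_add_int_mul_two_pi, Real.sin_add_int_mul_two_pi]
  · -- nonzero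
    intro h
    apply ha
    refine ⟨?_, ?_, ?_⟩
    · have := congrFun (congrFun h 0) 0; simpa [haa] using this
    · have := congrFun (congrFun h 0) 1; simpa [haa] using this
    · have := congrFun (congrFun h 0) 2; simpa [haa] using this
  · -- curl
    intro x
    funext j
    simp only [curl3, pderiv3_trig]
    set c := Real.cos (∑ l, K l * x l) with hc
    set s := Real.sin (∑ l, K l * x l) with hs
    fin_cases j <;>
      simp only [Matrix.cons_val_zero, Matrix.cons_val_one, Matrix.head_cons, Fin.isValue,
        Matrix.cons_val_two, Matrix.tail_cons, Pi.smul_apply, smul_eq_mul, hb, haa, Fin.reduceFinMk] <;>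
      field_simp
    · linear_combination (-(K 0) * c) * hdot' + (a0 * c) * hsum
    · linear_combination (-(K 1) * c) * hdot' + (a1 * c) * hsum
    · linear_combination (-(K 2) * c) * hdot' + (a2 * c) * hsum

lemma pderiv3_smooth {f : (Fin 3 → ℝ) → ℝ} (hf : ContDiff ℝ (⊤ : ℕ∞) f) (i : Fin 3) :
    ContDiff ℝ (⊤ : ℕ∞) (pderiv3 f i) :=
  (hf.fderiv_right (by simp)).clm_apply contDiff_const

lemma pderiv3_sub_pt {f g : (Fin 3 → ℝ) → ℝ} {x : Fin 3 → ℝ}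
    (hf : DifferentiableAt ℝ f x) (hg : DifferentiableAt ℝ g x) (i : Fin 3) :
    pderiv3 (fun y => f y - g y) i x = pderiv3 f i x - pderiv3 g i x := by
  simp [pderiv3, fderiv_fun_sub hf hg]

lemma pderiv3_add_pt {f g : (Fin 3 → ℝ) → ℝ} {x : Fin 3 → ℝ}
    (hf : DifferentiableAt ℝ f x) (hg : DifferentiableAt ℝ g x) (i : Fin 3) :
    pderiv3 (fun y => f y + g y) i x = pderiv3 f i x + pderiv3 g i x := by
  simp [pderiv3, fderiv_fun_add hf hg]

lemma pderiv3_const_mul_pt {f : (Fin 3 → ℝ) → ℝ} {x : Fin 3 → ℝ}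
    (hf : DifferentiableAt ℝ f x) (c : ℝ) (i : Fin 3) :
    pderiv3 (fun y => c * f y) i x = c * pderiv3 f i x := by
  simp [pderiv3, fderiv_const_mul hf c]

lemma pderiv3_comm {f : (Fin 3 → ℝ) → ℝ} (hf : ContDiff ℝ (⊤ : ℕ∞) f) (i j : Fin 3) (x : Fin 3 → ℝ) :
    pderiv3 (pderiv3 f j) i x = pderiv3 (pderiv3 f i) j x := by
  have hdf : ∀ y, HasFDerivAt f (fderiv ℝ f y) y := fun y =>
    (hf.differentiable (by simp) y).hasFDerivAt
  have h2 : ContDiff ℝ (⊤ : ℕ∞) (fderiv ℝ f) := hf.fderiv_right (by simp)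
  have hd2 : HasFDerivAt (fderiv ℝ f) (fderiv ℝ (fderiv ℝ f) x) x :=
    (h2.differentiable (by simp) x).hasFDerivAt
  have hsym := second_derivative_symmetric hdf hd2
  have key : ∀ l m : Fin 3, pderiv3 (pderiv3 f l) m x
      = fderiv ℝ (fderiv ℝ f) x (Pi.single m 1) (Pi.single l 1) := by
    intro l m
    have : pderiv3 f l = fun y => (fderiv ℝ f y) (Pi.single l 1) := rfl
    rw [pderiv3, this, fderiv_clm_apply (h2.differentiable (by simp) x)
      (differentiableAt_const _)]
    simp
  rw [key j i, key i j, hsym]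

lemma pderiv3_periodic {f : (Fin 3 → ℝ) → ℝ} (hf : Differentiable ℝ f)
    (hper : ∀ (x : Fin 3 → ℝ) (m : Fin 3 → ℤ), f (fun i => x i + 2 * π * (m i)) = f x)
    (j : Fin 3) (x : Fin 3 → ℝ) (m : Fin 3 → ℤ) :
    pderiv3 f j (fun i => x i + 2 * π * (m i)) = pderiv3 f j x := by
  set c : Fin 3 → ℝ := fun i => 2 * π * (m i) with hc
  have hfun : (fun y : Fin 3 → ℝ => f (y + c)) = f := funext fun y => hper y m
  have hT : HasFDerivAt (fun y : Fin 3 → ℝ => y + c)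
      (ContinuousLinearMap.id ℝ (Fin 3 → ℝ)) x := (hasFDerivAt_id x).add_const c
  have hcomp : HasFDerivAt (fun y : Fin 3 → ℝ => f (y + c))
      ((fderiv ℝ f (x + c)).comp (ContinuousLinearMap.id ℝ (Fin 3 → ℝ))) x :=
    (hf (x + c)).hasFDerivAt.comp x hT
  rw [hfun] at hcomp
  have : fderiv ℝ f x = fderiv ℝ f (x + c) := by
    rw [hcomp.fderiv]; ext y; simp
  show fderiv ℝ f (x + c) (Pi.single j 1) = _
  rw [pderiv3, this]

lemma laplace3 (v : (Fin 3 → ℝ) → Fin 3 → ℝ) (lam : ℝ) (hsm : ContDiff ℝ (⊤ : ℕ∞) v)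
    (hcurl : ∀ x, curl3 v x = lam • v x) (hlam : lam ≠ 0) :
    ∀ (i : Fin 3) (x : Fin 3 → ℝ),
      pderiv3 (pderiv3 (fun y => v y i) 0) 0 x + pderiv3 (pderiv3 (fun y => v y i) 1) 1 x
        + pderiv3 (pderiv3 (fun y => v y i) 2) 2 x = -(lam ^ 2) * v x i := by
  have hu : ∀ i : Fin 3, ContDiff ℝ (⊤ : ℕ∞) (fun y => v y i) := fun i => contDiff_pi.1 hsm i
  set u0 : (Fin 3 → ℝ) → ℝ := fun y => v y 0 with hu0
  set u1 : (Fin 3 → ℝ) → ℝ := fun y => v y 1 with hu1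
  set u2 : (Fin 3 → ℝ) → ℝ := fun y => v y 2 with hu2
  have e0 : (fun x => pderiv3 u2 1 x - pderiv3 u1 2 x) = fun x => lam * u0 x := by
    funext x; have := congrFun (hcurl x) 0; simpa [curl3] using this
  have e1 : (fun x => pderiv3 u0 2 x - pderiv3 u2 0 x) = fun x => lam * u1 x := by
    funext x; have := congrFun (hcurl x) 1; simpa [curl3] using this
  have e2 : (fun x => pderiv3 u1 0 x - pderiv3 u0 1 x) = fun x => lam * u2 x := by
    funext x; have := congrFun (hcurl x) 2; simpa [curl3] using this
  have step : ∀ (f g h : (Fin 3 → ℝ) → ℝ), ContDiff ℝ (⊤ : ℕ∞) f → ContDiff ℝ (⊤ : ℕ∞) g →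
      ContDiff ℝ (⊤ : ℕ∞) h → ((fun x => f x - g x) = fun x => lam * h x) →
      ∀ (j : Fin 3) (x : Fin 3 → ℝ),
        pderiv3 f j x - pderiv3 g j x = lam * pderiv3 h j x := by
    intro f g h hfc hgc hhc heq j x
    have h1 : pderiv3 (fun x => f x - g x) j x = pderiv3 f j x - pderiv3 g j x :=
      pderiv3_sub_pt (hfc.differentiable (by simp) x) (hgc.differentiable (by simp) x) j
    have h2 : pderiv3 (fun x => lam * h x) j x = lam * pderiv3 h j x :=
      pderiv3_const_mul_pt (hhc.differentiable (by simp) x) lam j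
    rw [← h1, heq, h2]
  have S0 := step _ _ _ (pderiv3_smooth (hu 2) 1) (pderiv3_smooth (hu 1) 2) (hu 0) e0
  have S1 := step _ _ _ (pderiv3_smooth (hu 0) 2) (pderiv3_smooth (hu 2) 0) (hu 1) e1
  have S2 := step _ _ _ (pderiv3_smooth (hu 1) 0) (pderiv3_smooth (hu 0) 1) (hu 2) e2
  have hdiv : ∀ x, pderiv3 u0 0 x + pderiv3 u1 1 x + pderiv3 u2 2 x = 0 := by
    intro x
    have h0 := S0 0 x
    have h1 := S1 1 x
    have h2 := S2 2 x
    have c0 := pderiv3_comm (hu 2) 0 1 x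
    have c1 := pderiv3_comm (hu 0) 1 2 x
    have c2 := pderiv3_comm (hu 1) 2 0 x
    have hz : lam * (pderiv3 u0 0 x + pderiv3 u1 1 x + pderiv3 u2 2 x) = 0 := by
      rw [mul_add, mul_add, ← h0, ← h1, ← h2]
      linarith [c0, c1, c2]
    rcases mul_eq_zero.1 hz with h | h
    · exact absurd h hlam
    · exact h
  have combine : ∀ (a b c : (Fin 3 → ℝ) → ℝ) (ja jb jc j : Fin 3), ContDiff ℝ (⊤ : ℕ∞) a →
      ContDiff ℝ (⊤ : ℕ∞) b → ContDiff ℝ (⊤ : ℕ∞) c →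
      ((fun y => pderiv3 a ja y + pderiv3 b jb y) = fun y => (-1 : ℝ) * pderiv3 c jc y) →
      ∀ x, pderiv3 (pderiv3 a ja) j x + pderiv3 (pderiv3 b jb) j x
        = -pderiv3 (pderiv3 c jc) j x := by
    intro a b c ja jb jc j ha hb hc heq x
    have h1 : pderiv3 (fun y => pderiv3 a ja y + pderiv3 b jb y) j x
        = pderiv3 (pderiv3 a ja) j x + pderiv3 (pderiv3 b jb) j x :=
      pderiv3_add_pt ((pderiv3_smooth ha ja).differentiable (by simp) x)
        ((pderiv3_smooth hb jb).differentiable (by simp) x) j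
    have h2 : pderiv3 (fun y => (-1 : ℝ) * pderiv3 c jc y) j x
        = (-1 : ℝ) * pderiv3 (pderiv3 c jc) j x :=
      pderiv3_const_mul_pt ((pderiv3_smooth hc jc).differentiable (by simp) x) (-1) j
    rw [← h1, heq, h2]; ring
  intro i x
  fin_cases i
  · have hA := S2 1 x
    have hB := S1 2 x
    have c1 := pderiv3_comm (hu 1) 1 0 x
    have c2 := pderiv3_comm (hu 2) 2 0 x
    have hk := combine u1 u2 u0 1 2 0 0 (hu 1) (hu 2) (hu 0)
      (by funext y; have := hdiv y; linarith) x
    have hval := congrFun e0 x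
    have hgoal : lam ^ 2 * u0 x = lam * pderiv3 u2 1 x - lam * pderiv3 u1 2 x := by
      linear_combination -lam * hval
    rw [← hA, ← hB] at hgoal
    show pderiv3 (pderiv3 u0 0) 0 x + pderiv3 (pderiv3 u0 1) 1 x
        + pderiv3 (pderiv3 u0 2) 2 x = -(lam ^ 2) * u0 x
    linarith [hgoal, c1, c2, hk]
  · have hA := S0 2 x
    have hB := S2 0 x
    have c1 := pderiv3_comm (hu 2) 2 1 x
    have c2 := pderiv3_comm (hu 0) 0 1 x
    have hk := combine u2 u0 u1 2 0 1 1 (hu 2) (hu 0) (hu 1)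
      (by funext y; have := hdiv y; linarith) x
    have hval := congrFun e1 x
    have hgoal : lam ^ 2 * u1 x = lam * pderiv3 u0 2 x - lam * pderiv3 u2 0 x := by
      linear_combination -lam * hval
    rw [← hA, ← hB] at hgoal
    show pderiv3 (pderiv3 u1 0) 0 x + pderiv3 (pderiv3 u1 1) 1 x
        + pderiv3 (pderiv3 u1 2) 2 x = -(lam ^ 2) * u1 x
    linarith [hgoal, c1, c2, hk]
  · have hA := S1 0 x
    have hB := S0 1 x
    have c1 := pderiv3_comm (hu 0) 0 2 x
    have c2 := pderiv3_comm (hu 1) 1 2 x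
    have hk := combine u0 u1 u2 0 1 2 2 (hu 0) (hu 1) (hu 2)
      (by funext y; have := hdiv y; linarith) x
    have hval := congrFun e2 x
    have hgoal : lam ^ 2 * u2 x = lam * pderiv3 u1 0 x - lam * pderiv3 u0 1 x := by
      linear_combination -lam * hval
    rw [← hA, ← hB] at hgoal
    show pderiv3 (pderiv3 u2 0) 0 x + pderiv3 (pderiv3 u2 1) 1 x
        + pderiv3 (pderiv3 u2 2) 2 x = -(lam ^ 2) * u2 x
    linarith [hgoal, c1, c2, hk]

open MeasureTheory intervalIntegral Set


noncomputable def EE (n : ℤ) (t : ℝ) : ℂ := Complex.exp (-(n : ℂ) * Complex.I * t)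

lemma EE_continuous (n : ℤ) : Continuous (EE n) :=
  Complex.continuous_exp.comp (continuous_const.mul Complex.continuous_ofReal)

lemma EE_hasDerivAt (n : ℤ) (t : ℝ) :
    HasDerivAt (EE n) (-(n : ℂ) * Complex.I * EE n t) t := by
  have h1 : HasDerivAt (fun t : ℝ => ((t : ℂ))) 1 t := Complex.ofRealCLM.hasDerivAt
  have h2 : HasDerivAt (fun t : ℝ => -(n : ℂ) * Complex.I * t)
      (-(n : ℂ) * Complex.I) t := by simpa using h1.const_mul (-(n : ℂ) * Complex.I)
  have h3 := h2.cexp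
  rw [show (-(n : ℂ) * Complex.I * EE n t)
      = Complex.exp (-(n : ℂ) * Complex.I * (t : ℂ)) * (-(n : ℂ) * Complex.I) from by
    rw [EE]; ring]
  exact h3

lemma EE_zero (n : ℤ) : EE n 0 = 1 := by simp [EE]

lemma EE_two_pi (n : ℤ) : EE n (2 * π) = 1 := by
  have : -(n : ℂ) * Complex.I * ((2 * π : ℝ) : ℂ) = (-n : ℤ) * (2 * π * Complex.I) := by
    push_cast; ring
  rw [EE, this, Complex.exp_int_mul_two_pi_mul_I]

/-- Integration by parts twice: `∫ EE n * f'' = -n² ∫ EE n * f` for `2π`-periodic `f`. -/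
lemma parts2 (f f' f'' : ℝ → ℂ) (hd1 : ∀ t, HasDerivAt f (f' t) t)
    (hd2 : ∀ t, HasDerivAt f' (f'' t) t) (hc : Continuous f'')
    (hp : f (2 * π) = f 0) (hp' : f' (2 * π) = f' 0) (n : ℤ) :
    (∫ t in (0:ℝ)..(2 * π), EE n t * f'' t) =
      -(n : ℂ) ^ 2 * ∫ t in (0:ℝ)..(2 * π), EE n t * f t := by
  have hcf : Continuous f := by
    rw [continuous_iff_continuousAt]; exact fun t => (hd1 t).continuousAt
  have hcf' : Continuous f' := by
    rw [continuous_iff_continuousAt]; exact fun t => (hd2 t).continuousAt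
  set G : ℝ → ℂ := fun t => EE n t * (f' t + (n : ℂ) * Complex.I * f t) with hG
  have key : ∀ t, HasDerivAt G (EE n t * f'' t + (n : ℂ) ^ 2 * (EE n t * f t)) t := by
    intro t
    have h := (EE_hasDerivAt n t).mul ((hd2 t).add ((hd1 t).const_mul ((n : ℂ) * Complex.I)))
    convert h using 1
    · rfl
    · rfl
    rw [Pi.add_apply]
    have hI := Complex.I_sq
    linear_combination ((n:ℂ)^2 * EE n t * f t) * hI
  have hcint : Continuous fun t => EE n t * f'' t + (n : ℂ) ^ 2 * (EE n t * f t) :=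
    ((EE_continuous n).mul hc).add (continuous_const.mul ((EE_continuous n).mul hcf))
  have hftc : (∫ t in (0:ℝ)..(2 * π), (EE n t * f'' t + (n : ℂ) ^ 2 * (EE n t * f t)))
      = G (2 * π) - G 0 :=
    integral_eq_sub_of_hasDerivAt (fun t _ => key t) (hcint.intervalIntegrable _ _)
  have hzero : G (2 * π) - G 0 = 0 := by
    rw [hG]; simp [EE_two_pi, EE_zero, hp, hp']
  rw [integral_add (((EE_continuous n).fun_mul hc).intervalIntegrable _ _)
    ((continuous_const.fun_mul ((EE_continuous n).fun_mul hcf)).intervalIntegrable _ _),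
    intervalIntegral.integral_const_mul] at hftc
  rw [hzero] at hftc
  linear_combination hftc


/-- Differentiation under the interval integral, for jointly continuous data. -/
lemma hasDerivAt_param (F F' : ℝ → ℝ → ℂ)
    (hF : Continuous fun p : ℝ × ℝ => F p.1 p.2)
    (hF' : Continuous fun p : ℝ × ℝ => F' p.1 p.2)
    (hd : ∀ s t, HasDerivAt (fun u => F u t) (F' s t) s) (a b s₀ : ℝ) :
    HasDerivAt (fun s => ∫ t in a..b, F s t) (∫ t in a..b, F' s₀ t) s₀ := by
  obtain ⟨M, hM⟩ := (isCompact_Icc (a := s₀ - 1) (b := s₀ + 1)).prod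
    (isCompact_uIcc (a := a) (b := b)) |>.exists_bound_of_continuousOn hF'.continuousOn
  have h := intervalIntegral.hasDerivAt_integral_of_dominated_loc_of_deriv_le
    (F := F) (F' := F') (x₀ := s₀) (a := a) (b := b) (bound := fun _ => M)
    (Metric.ball_mem_nhds s₀ one_pos)
    (Filter.Eventually.of_forall fun x =>
      ((hF.comp (Continuous.prodMk_right x)).aestronglyMeasurable))
    ((hF.comp (Continuous.prodMk_right s₀)).intervalIntegrable a b)
    ((hF'.comp (Continuous.prodMk_right s₀)).aestronglyMeasurable)
    (Filter.Eventually.of_forall fun t ht x hx => by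
      have : (x, t) ∈ Icc (s₀ - 1) (s₀ + 1) ×ˢ uIcc a b := by
        constructor
        · have := Metric.mem_ball.1 hx
          rw [Real.dist_eq, abs_sub_lt_iff] at this
          constructor <;> [linarith [this.2]; linarith [this.1]]
        · exact uIoc_subset_uIcc ht
      exact hM _ this)
    (intervalIntegrable_const (μ := volume))
    (Filter.Eventually.of_forall fun t ht x hx => hd x t)
  exact h.2

/-- Uniqueness of Fourier coefficients for continuous `2π`-periodic functions. -/
lemma fourier_uniqueness (f : ℝ → ℂ) (hf : Continuous f) (hper : ∀ t, f (t + 2 * π) = f t)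
    (h : ∀ n : ℤ, (∫ t in (0:ℝ)..(2 * π), EE n t * f t) = 0) : ∀ t, f t = 0 := by
  haveI : Fact (0 < 2 * π) := ⟨by positivity⟩
  set F : AddCircle (2 * π) → ℂ := AddCircle.liftIco (2 * π) 0 f with hF
  have hFc : Continuous F :=
    AddCircle.liftIco_zero_continuous (by simpa using (hper 0).symm) hf.continuousOn
  set Fc : C(AddCircle (2 * π), ℂ) := ⟨F, hFc⟩ with hFcdef
  have hcoeff : ∀ n : ℤ, fourierCoeff (⇑Fc) n = 0 := by
    intro n
    have h1 := fourierCoeff_liftIco_eq (T := 2 * π) (a := (0:ℝ)) f n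
    rw [fourierCoeffOn_eq_integral] at h1
    rw [show (⇑Fc : AddCircle (2 * π) → ℂ) = AddCircle.liftIco (2 * π) 0 f from rfl, h1]
    have h2 : ∀ x : ℝ, (fourier (-n) (x : AddCircle (0 + 2 * π - 0))) • f x = EE n x * f x := by
      intro x
      rw [fourier_coe_apply, smul_eq_mul, EE]
      congr 2
      have hpi : ((π : ℂ)) ≠ 0 := Complex.ofReal_ne_zero.2 Real.pi_ne_zero
      push_cast
      field_simp
      ring
    simp_rw [h2]
    simp only [zero_add, sub_zero]
    rw [h n, smul_zero]
  have hg : (ContinuousMap.toLp (E := ℂ) 2 AddCircle.haarAddCircle ℂ Fc) = 0 := by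
    apply fourierBasis.repr.injective
    rw [map_zero]
    ext n
    rw [fourierBasis_repr, fourierCoeff_toLp, hcoeff n]
    rfl
  have hae : (⇑Fc : AddCircle (2 * π) → ℂ) =ᵐ[AddCircle.haarAddCircle] 0 := by
    have h1 := ContinuousMap.coeFn_toLp (p := 2) (μ := AddCircle.haarAddCircle) (𝕜 := ℂ) Fc
    rw [hg] at h1
    exact (MeasureTheory.Lp.coeFn_zero ℂ 2 _).symm.trans h1 |>.symm
  have hFz : (⇑Fc : AddCircle (2 * π) → ℂ) = 0 :=
    (Continuous.ae_eq_iff_eq (μ := AddCircle.haarAddCircle) hFc continuous_const).1 hae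
  intro t
  obtain ⟨y, hy, hty⟩ := (Function.Periodic.exists_mem_Ico₀
    (fun x => hper x) (by positivity) t)
  rw [hty, show f y = F (↑y) from (AddCircle.liftIco_coe_apply (by simpa using hy)).symm]
  exact congrFun hFz _

/-- A smooth `2π`-periodic scalar function on `ℝ³`. -/
def TorusFun (w : (Fin 3 → ℝ) → ℝ) : Prop :=
  ContDiff ℝ (⊤ : ℕ∞) w ∧ ∀ (x : Fin 3 → ℝ) (m : Fin 3 → ℤ), w (fun i => x i + 2 * π * (m i)) = w x

lemma TorusFun.pderiv {w : (Fin 3 → ℝ) → ℝ} (hw : TorusFun w) (j : Fin 3) :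
    TorusFun (pderiv3 w j) :=
  ⟨pderiv3_smooth hw.1 j, fun x m =>
    pderiv3_periodic (hw.1.differentiable (by simp)) hw.2 j x m⟩

lemma cont_vec3 {X : Type*} [TopologicalSpace X] {f g h : X → ℝ}
    (hf : Continuous f) (hg : Continuous g) (hh : Continuous h) :
    Continuous fun x => (![f x, g x, h x] : Fin 3 → ℝ) := by
  apply continuous_pi
  intro j
  fin_cases j <;> simpa

-- Path derivatives
lemma path_deriv0 {w : (Fin 3 → ℝ) → ℝ} (hw : ContDiff ℝ (⊤ : ℕ∞) w) (s r t : ℝ) :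
    HasDerivAt (fun t => w ![t, s, r]) (pderiv3 w 0 ![t, s, r]) t := by
  have hγ : HasDerivAt (fun t : ℝ => (![(0:ℝ), s, r] : Fin 3 → ℝ)
      + t • (Pi.single 0 1 : Fin 3 → ℝ)) (Pi.single 0 1 : Fin 3 → ℝ) t := by
    simpa using ((hasDerivAt_id t).smul_const (Pi.single (0 : Fin 3) (1:ℝ))).const_add
      (![(0:ℝ), s, r])
  have heq : (fun t : ℝ => (![(0:ℝ), s, r] : Fin 3 → ℝ) + t • (Pi.single 0 1 : Fin 3 → ℝ))
      = fun t : ℝ => (![t, s, r] : Fin 3 → ℝ) := by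
    funext t; funext j; fin_cases j <;> simp [Pi.single_apply]
  rw [heq] at hγ
  exact ((hw.differentiable (by simp) _).hasFDerivAt).comp_hasDerivAt t hγ

lemma path_deriv1 {w : (Fin 3 → ℝ) → ℝ} (hw : ContDiff ℝ (⊤ : ℕ∞) w) (t r s : ℝ) :
    HasDerivAt (fun s => w ![t, s, r]) (pderiv3 w 1 ![t, s, r]) s := by
  have hγ : HasDerivAt (fun s : ℝ => (![t, (0:ℝ), r] : Fin 3 → ℝ)
      + s • (Pi.single 1 1 : Fin 3 → ℝ)) (Pi.single 1 1 : Fin 3 → ℝ) s := by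
    simpa using ((hasDerivAt_id s).smul_const (Pi.single (1 : Fin 3) (1:ℝ))).const_add
      (![t, (0:ℝ), r])
  have heq : (fun s : ℝ => (![t, (0:ℝ), r] : Fin 3 → ℝ) + s • (Pi.single 1 1 : Fin 3 → ℝ))
      = fun s : ℝ => (![t, s, r] : Fin 3 → ℝ) := by
    funext s; funext j; fin_cases j <;> simp [Pi.single_apply]
  rw [heq] at hγ
  exact ((hw.differentiable (by simp) _).hasFDerivAt).comp_hasDerivAt s hγ

lemma path_deriv2 {w : (Fin 3 → ℝ) → ℝ} (hw : ContDiff ℝ (⊤ : ℕ∞) w) (t s r : ℝ) :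
    HasDerivAt (fun r => w ![t, s, r]) (pderiv3 w 2 ![t, s, r]) r := by
  have hγ : HasDerivAt (fun r : ℝ => (![t, s, (0:ℝ)] : Fin 3 → ℝ)
      + r • (Pi.single 2 1 : Fin 3 → ℝ)) (Pi.single 2 1 : Fin 3 → ℝ) r := by
    simpa using ((hasDerivAt_id r).smul_const (Pi.single (2 : Fin 3) (1:ℝ))).const_add
      (![t, s, (0:ℝ)])
  have heq : (fun r : ℝ => (![t, s, (0:ℝ)] : Fin 3 → ℝ) + r • (Pi.single 2 1 : Fin 3 → ℝ))
      = fun r : ℝ => (![t, s, r] : Fin 3 → ℝ) := by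
    funext r; funext j; fin_cases j <;> simp [Pi.single_apply]
  rw [heq] at hγ
  exact ((hw.differentiable (by simp) _).hasFDerivAt).comp_hasDerivAt r hγ

-- single-variable periodicity
lemma per0 {w : (Fin 3 → ℝ) → ℝ} (hw : TorusFun w) (t s r : ℝ) :
    w ![t + 2 * π, s, r] = w ![t, s, r] := by
  have := hw.2 ![t, s, r] ![1, 0, 0]
  have he : (fun i => (![t, s, r] : Fin 3 → ℝ) i + 2 * π * ((![1, 0, 0] : Fin 3 → ℤ) i : ℝ))
      = ![t + 2 * π, s, r] := by
    funext j; fin_cases j <;> simp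
  rwa [he] at this

lemma per1 {w : (Fin 3 → ℝ) → ℝ} (hw : TorusFun w) (t s r : ℝ) :
    w ![t, s + 2 * π, r] = w ![t, s, r] := by
  have := hw.2 ![t, s, r] ![0, 1, 0]
  have he : (fun i => (![t, s, r] : Fin 3 → ℝ) i + 2 * π * ((![0, 1, 0] : Fin 3 → ℤ) i : ℝ))
      = ![t, s + 2 * π, r] := by
    funext j; fin_cases j <;> simp
  rwa [he] at this

lemma per2 {w : (Fin 3 → ℝ) → ℝ} (hw : TorusFun w) (t s r : ℝ) :
    w ![t, s, r + 2 * π] = w ![t, s, r] := by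
  have := hw.2 ![t, s, r] ![0, 0, 1]
  have he : (fun i => (![t, s, r] : Fin 3 → ℝ) i + 2 * π * ((![0, 0, 1] : Fin 3 → ℤ) i : ℝ))
      = ![t, s, r + 2 * π] := by
    funext j; fin_cases j <;> simp
  rwa [he] at this

noncomputable def G0 (w : (Fin 3 → ℝ) → ℝ) (n : ℤ) (s r : ℝ) : ℂ :=
  ∫ t in (0:ℝ)..(2 * π), EE n t * (w ![t, s, r] : ℂ)

noncomputable def H0 (w : (Fin 3 → ℝ) → ℝ) (n1 n2 : ℤ) (r : ℝ) : ℂ :=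
  ∫ s in (0:ℝ)..(2 * π), EE n2 s * G0 w n1 s r

noncomputable def C0 (w : (Fin 3 → ℝ) → ℝ) (n1 n2 n3 : ℤ) : ℂ :=
  ∫ r in (0:ℝ)..(2 * π), EE n3 r * H0 w n1 n2 r

lemma G0_cont {w : (Fin 3 → ℝ) → ℝ} (hw : TorusFun w) (n : ℤ) :
    Continuous fun p : ℝ × ℝ => G0 w n p.1 p.2 := by
  apply continuous_parametric_intervalIntegral_of_continuous' (μ := volume)
    (f := fun (p : ℝ × ℝ) (t : ℝ) => EE n t * (w ![t, p.1, p.2] : ℂ))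
  apply Continuous.mul
  · exact (EE_continuous n).comp continuous_snd
  · exact Complex.continuous_ofReal.comp <| (hw.1.continuous).comp <|
      cont_vec3 continuous_snd (continuous_fst.comp continuous_fst)
        (continuous_snd.comp continuous_fst)

lemma G0_s {w : (Fin 3 → ℝ) → ℝ} (hw : TorusFun w) (n : ℤ) (r s₀ : ℝ) :
    HasDerivAt (fun s => G0 w n s r) (G0 (pderiv3 w 1) n s₀ r) s₀ := by
  apply hasDerivAt_param (fun s t => EE n t * (w ![t, s, r] : ℂ))
    (fun s t => EE n t * ((pderiv3 w 1) ![t, s, r] : ℂ))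
  · exact ((EE_continuous n).comp continuous_snd).mul
      (Complex.continuous_ofReal.comp <| (hw.1.continuous).comp <|
        cont_vec3 continuous_snd continuous_fst continuous_const)
  · exact ((EE_continuous n).comp continuous_snd).mul
      (Complex.continuous_ofReal.comp <| ((pderiv3_smooth hw.1 1).continuous).comp <|
        cont_vec3 continuous_snd continuous_fst continuous_const)
  · intro s t
    exact ((path_deriv1 hw.1 t r s).ofReal_comp).const_mul (EE n t)

lemma G0_r {w : (Fin 3 → ℝ) → ℝ} (hw : TorusFun w) (n : ℤ) (s r₀ : ℝ) :
    HasDerivAt (fun r => G0 w n s r) (G0 (pderiv3 w 2) n s r₀) r₀ := by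
  apply hasDerivAt_param (fun r t => EE n t * (w ![t, s, r] : ℂ))
    (fun r t => EE n t * ((pderiv3 w 2) ![t, s, r] : ℂ))
  · exact ((EE_continuous n).comp continuous_snd).mul
      (Complex.continuous_ofReal.comp <| (hw.1.continuous).comp <|
        cont_vec3 continuous_snd continuous_const continuous_fst)
  · exact ((EE_continuous n).comp continuous_snd).mul
      (Complex.continuous_ofReal.comp <| ((pderiv3_smooth hw.1 2).continuous).comp <|
        cont_vec3 continuous_snd continuous_const continuous_fst)
  · intro r t
    exact ((path_deriv2 hw.1 t s r).ofReal_comp).const_mul (EE n t)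

lemma G0_per_s {w : (Fin 3 → ℝ) → ℝ} (hw : TorusFun w) (n : ℤ) (s r : ℝ) :
    G0 w n (s + 2 * π) r = G0 w n s r := by
  unfold G0
  congr 1
  funext t
  rw [per1 hw]

lemma G0_per_r {w : (Fin 3 → ℝ) → ℝ} (hw : TorusFun w) (n : ℤ) (s r : ℝ) :
    G0 w n s (r + 2 * π) = G0 w n s r := by
  unfold G0
  congr 1
  funext t
  rw [per2 hw]

lemma G0_parts {w : (Fin 3 → ℝ) → ℝ} (hw : TorusFun w) (n : ℤ) (s r : ℝ) :
    G0 (pderiv3 (pderiv3 w 0) 0) n s r = -(n : ℂ) ^ 2 * G0 w n s r := by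
  apply parts2 (fun t => (w ![t, s, r] : ℂ)) (fun t => ((pderiv3 w 0) ![t, s, r] : ℂ))
  · exact fun t => (path_deriv0 hw.1 s r t).ofReal_comp
  · exact fun t => (path_deriv0 (pderiv3_smooth hw.1 0) s r t).ofReal_comp
  · exact Complex.continuous_ofReal.comp <|
      ((pderiv3_smooth (pderiv3_smooth hw.1 0) 0).continuous).comp <|
        cont_vec3 continuous_id continuous_const continuous_const
  · have := per0 hw 0 s r; simpa using congrArg (fun x : ℝ => (x : ℂ)) this
  · have := per0 (hw.pderiv 0) 0 s r; simpa using congrArg (fun x : ℝ => (x : ℂ)) this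

set_option maxHeartbeats 1000000 in
lemma H0_cont {w : (Fin 3 → ℝ) → ℝ} (hw : TorusFun w) (n1 n2 : ℤ) :
    Continuous fun r => H0 w n1 n2 r := by
  apply continuous_parametric_intervalIntegral_of_continuous' (μ := volume)
    (f := fun (r : ℝ) (s : ℝ) => EE n2 s * G0 w n1 s r)
  exact ((EE_continuous n2).comp continuous_snd).mul
    ((G0_cont hw n1).comp (continuous_snd.prodMk continuous_fst))

set_option maxHeartbeats 1000000 in
lemma H0_r {w : (Fin 3 → ℝ) → ℝ} (hw : TorusFun w) (n1 n2 : ℤ) (r₀ : ℝ) :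
    HasDerivAt (fun r => H0 w n1 n2 r) (H0 (pderiv3 w 2) n1 n2 r₀) r₀ := by
  unfold H0
  apply hasDerivAt_param (fun r s => EE n2 s * G0 w n1 s r)
    (fun r s => EE n2 s * G0 (pderiv3 w 2) n1 s r)
  · exact ((EE_continuous n2).comp continuous_snd).mul
      ((G0_cont hw n1).comp (continuous_snd.prodMk continuous_fst))
  · exact ((EE_continuous n2).comp continuous_snd).mul
      ((G0_cont (hw.pderiv 2) n1).comp (continuous_snd.prodMk continuous_fst))
  · intro r s
    exact (G0_r hw n1 s r).const_mul (EE n2 s)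

set_option maxHeartbeats 1000000 in
lemma H0_per {w : (Fin 3 → ℝ) → ℝ} (hw : TorusFun w) (n1 n2 : ℤ) (r : ℝ) :
    H0 w n1 n2 (r + 2 * π) = H0 w n1 n2 r := by
  unfold H0
  congr 1
  funext s
  rw [G0_per_r hw]

set_option maxHeartbeats 1000000 in
lemma H0_parts {w : (Fin 3 → ℝ) → ℝ} (hw : TorusFun w) (n1 n2 : ℤ) (r : ℝ) :
    H0 (pderiv3 (pderiv3 w 1) 1) n1 n2 r = -(n2 : ℂ) ^ 2 * H0 w n1 n2 r := by
  apply parts2 (fun s => G0 w n1 s r) (fun s => G0 (pderiv3 w 1) n1 s r)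
  · exact fun s => G0_s hw n1 r s
  · exact fun s => G0_s (hw.pderiv 1) n1 r s
  · exact (G0_cont ((hw.pderiv 1).pderiv 1) n1).comp (continuous_id.prodMk continuous_const)
  · exact G0_per_s hw n1 0 r ▸ by rw [zero_add]
  · exact G0_per_s (hw.pderiv 1) n1 0 r ▸ by rw [zero_add]

set_option maxHeartbeats 1000000 in
lemma C0_parts {w : (Fin 3 → ℝ) → ℝ} (hw : TorusFun w) (n1 n2 n3 : ℤ) :
    C0 (pderiv3 (pderiv3 w 2) 2) n1 n2 n3 = -(n3 : ℂ) ^ 2 * C0 w n1 n2 n3 := by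
  apply parts2 (fun r => H0 w n1 n2 r) (fun r => H0 (pderiv3 w 2) n1 n2 r)
  · exact fun r => H0_r hw n1 n2 r
  · exact fun r => H0_r (hw.pderiv 2) n1 n2 r
  · exact H0_cont ((hw.pderiv 2).pderiv 2) n1 n2
  · have := H0_per hw n1 n2 0; rwa [zero_add] at this
  · have := H0_per (hw.pderiv 2) n1 n2 0; rwa [zero_add] at this

set_option maxHeartbeats 1000000 in
lemma coeff_identity {u : (Fin 3 → ℝ) → ℝ} (hu : TorusFun u) (lam : ℝ)
    (hlap : ∀ x, pderiv3 (pderiv3 u 0) 0 x + pderiv3 (pderiv3 u 1) 1 x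
      + pderiv3 (pderiv3 u 2) 2 x = -(lam ^ 2) * u x)
    (n1 n2 n3 : ℤ) (hC : C0 u n1 n2 n3 ≠ 0) :
    lam ^ 2 = (n1 : ℝ) ^ 2 + (n2 : ℝ) ^ 2 + (n3 : ℝ) ^ 2 := by
  set D00 := pderiv3 (pderiv3 u 0) 0 with hD00
  set D11 := pderiv3 (pderiv3 u 1) 1 with hD11
  set D22 := pderiv3 (pderiv3 u 2) 2 with hD22
  have hcD00 : Continuous D00 := (pderiv3_smooth (pderiv3_smooth hu.1 0) 0).continuous
  have hcD11 : Continuous D11 := (pderiv3_smooth (pderiv3_smooth hu.1 1) 1).continuous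
  have hcD22 : Continuous D22 := (pderiv3_smooth (pderiv3_smooth hu.1 2) 2).continuous
  have hcu : Continuous u := hu.1.continuous
  -- integrand continuity helper for the t-integral
  have hti : ∀ (w : (Fin 3 → ℝ) → ℝ), Continuous w → ∀ (n : ℤ) (s r : ℝ),
      IntervalIntegrable (fun t => EE n t * (w ![t, s, r] : ℂ)) volume 0 (2 * π) := by
    intro w hw n s r
    exact ((EE_continuous n).mul (Complex.continuous_ofReal.comp <| hw.comp <|
      cont_vec3 continuous_id continuous_const continuous_const)).intervalIntegrable _ _
  have key1 : ∀ s r : ℝ, G0 D00 n1 s r + G0 D11 n1 s r + G0 D22 n1 s r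
      = (-(lam ^ 2) : ℂ) * G0 u n1 s r := by
    intro s r
    have e : ∀ t : ℝ, EE n1 t * (D00 ![t, s, r] : ℂ) + EE n1 t * (D11 ![t, s, r] : ℂ)
        + EE n1 t * (D22 ![t, s, r] : ℂ)
        = (-(lam ^ 2) : ℂ) * (EE n1 t * (u ![t, s, r] : ℂ)) := by
      intro t
      have h := hlap ![t, s, r]
      have h' : ((D00 ![t, s, r] : ℝ) : ℂ) + (D11 ![t, s, r] : ℂ) + (D22 ![t, s, r] : ℂ)
          = (-(lam ^ 2) : ℂ) * (u ![t, s, r] : ℂ) := by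
        push_cast
        exact_mod_cast congrArg (fun x : ℝ => (x : ℂ)) h
      linear_combination (EE n1 t) * h'
    unfold G0
    rw [← intervalIntegral.integral_add (hti _ hcD00 n1 s r) (hti _ hcD11 n1 s r),
      ← intervalIntegral.integral_add ((hti _ hcD00 n1 s r).add (hti _ hcD11 n1 s r))
        (hti _ hcD22 n1 s r), ← intervalIntegral.integral_const_mul]
    exact intervalIntegral.integral_congr fun t _ => e t
  have key2 : ∀ s r : ℝ, G0 D11 n1 s r + G0 D22 n1 s r
      = ((n1 : ℂ) ^ 2 - (lam ^ 2 : ℝ)) * G0 u n1 s r := by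
    intro s r
    have h1 := key1 s r
    have h2 := G0_parts hu n1 s r
    rw [← hD00] at h2
    push_cast
    linear_combination h1 - h2
  -- integrand continuity for s-integrals
  have hsi : ∀ (w : (Fin 3 → ℝ) → ℝ), TorusFun w → ∀ (n m : ℤ) (r : ℝ),
      IntervalIntegrable (fun s => EE m s * G0 w n s r) volume 0 (2 * π) := by
    intro w hw n m r
    exact ((EE_continuous m).mul ((G0_cont hw n).comp
      (continuous_id.prodMk continuous_const))).intervalIntegrable _ _
  have hTD11 : TorusFun D11 := (hu.pderiv 1).pderiv 1
  have hTD22 : TorusFun D22 := (hu.pderiv 2).pderiv 2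
  have key3 : ∀ r : ℝ, H0 D11 n1 n2 r + H0 D22 n1 n2 r
      = ((n1 : ℂ) ^ 2 - (lam ^ 2 : ℝ)) * H0 u n1 n2 r := by
    intro r
    unfold H0
    rw [← intervalIntegral.integral_add (hsi _ hTD11 n1 n2 r) (hsi _ hTD22 n1 n2 r),
      ← intervalIntegral.integral_const_mul]
    refine intervalIntegral.integral_congr fun s _ => ?_
    have := key2 s r
    linear_combination (EE n2 s) * this
  have key4 : ∀ r : ℝ, H0 D22 n1 n2 r
      = ((n1 : ℂ) ^ 2 + (n2 : ℂ) ^ 2 - (lam ^ 2 : ℝ)) * H0 u n1 n2 r := by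
    intro r
    have h1 := key3 r
    have h2 := H0_parts hu n1 n2 r
    rw [← hD11] at h2
    linear_combination h1 - h2
  have key5 : C0 D22 n1 n2 n3
      = ((n1 : ℂ) ^ 2 + (n2 : ℂ) ^ 2 - (lam ^ 2 : ℝ)) * C0 u n1 n2 n3 := by
    unfold C0
    rw [← intervalIntegral.integral_const_mul]
    refine intervalIntegral.integral_congr fun r _ => ?_
    have := key4 r
    linear_combination (EE n3 r) * this
  have h2 := C0_parts hu n1 n2 n3
  rw [← hD22] at h2
  have hfin : ((n1 : ℂ) ^ 2 + (n2 : ℂ) ^ 2 + (n3 : ℂ) ^ 2 - (lam ^ 2 : ℝ)) * C0 u n1 n2 n3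
      = 0 := by
    linear_combination h2 - key5
  rcases mul_eq_zero.1 hfin with h | h
  · have : ((lam ^ 2 : ℝ) : ℂ) = ((((n1:ℝ)^2 + (n2:ℝ)^2 + (n3:ℝ)^2 : ℝ)) : ℂ) := by
      push_cast at h ⊢
      linear_combination -h
    exact_mod_cast this
  · exact absurd h hC

lemma eigen_square {u : (Fin 3 → ℝ) → ℝ} (hu : TorusFun u) (lam : ℝ)
    (hlap : ∀ x, pderiv3 (pderiv3 u 0) 0 x + pderiv3 (pderiv3 u 1) 1 x
      + pderiv3 (pderiv3 u 2) 2 x = -(lam ^ 2) * u x)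
    (p : Fin 3 → ℝ) (hup : u p ≠ 0) :
    ∃ n1 n2 n3 : ℤ, lam ^ 2 = (n1 : ℝ) ^ 2 + (n2 : ℝ) ^ 2 + (n3 : ℝ) ^ 2 := by
  have hp : (![p 0, p 1, p 2] : Fin 3 → ℝ) = p := by
    funext j; fin_cases j <;> rfl
  have h1 : ∃ n1 : ℤ, G0 u n1 (p 1) (p 2) ≠ 0 := by
    by_contra hcon; push_neg at hcon
    have hz := fourier_uniqueness (fun t => (u ![t, p 1, p 2] : ℂ))
      (Complex.continuous_ofReal.comp (hu.1.continuous.comp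
        (cont_vec3 continuous_id continuous_const continuous_const)))
      (fun t => by exact_mod_cast congrArg (fun x : ℝ => (x : ℂ)) (per0 hu t (p 1) (p 2)))
      (fun n => hcon n) (p 0)
    rw [hp] at hz
    exact hup (by exact_mod_cast hz)
  obtain ⟨n1, hn1⟩ := h1
  have h2 : ∃ n2 : ℤ, H0 u n1 n2 (p 2) ≠ 0 := by
    by_contra hcon; push_neg at hcon
    have hz := fourier_uniqueness (fun s => G0 u n1 s (p 2))
      ((G0_cont hu n1).comp (continuous_id.prodMk continuous_const))
      (fun s => G0_per_s hu n1 s (p 2))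
      (fun n => hcon n) (p 1)
    exact hn1 hz
  obtain ⟨n2, hn2⟩ := h2
  have h3 : ∃ n3 : ℤ, C0 u n1 n2 n3 ≠ 0 := by
    by_contra hcon; push_neg at hcon
    have hz := fourier_uniqueness (fun r => H0 u n1 n2 r)
      (H0_cont hu n1 n2)
      (fun r => H0_per hu n1 n2 r)
      (fun n => hcon n) (p 2)
    exact hn2 hz
  obtain ⟨n3, hn3⟩ := h3
  exact ⟨n1, n2, n3, coeff_identity hu lam hlap n1 n2 n3 hn3⟩

/-- The eigenvalues of curl on the flat 3-torus are exactly the numbers `±|k|`,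
`k ∈ ℤ³ \ {0}`; in particular every eigenvalue `λ` satisfies `λ² ∈ ℤ`. -/
theorem stmt11 :
    (∀ k : Fin 3 → ℤ, k ≠ 0 → ∀ lam : ℝ,
      (lam = Real.sqrt (∑ i, ((k i : ℝ)) ^ 2) ∨ lam = -Real.sqrt (∑ i, ((k i : ℝ)) ^ 2)) →
      ∃ v : (Fin 3 → ℝ) → Fin 3 → ℝ,
        IsTorusField v ∧ v ≠ 0 ∧ ∀ x, curl3 v x = lam • v x) ∧
    (∀ lam : ℝ, lam ≠ 0 →
      (∃ v : (Fin 3 → ℝ) → Fin 3 → ℝ,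
        IsTorusField v ∧ v ≠ 0 ∧ ∀ x, curl3 v x = lam • v x) →
      (∃ k : Fin 3 → ℤ, k ≠ 0 ∧
        (lam = Real.sqrt (∑ i, ((k i : ℝ)) ^ 2) ∨
          lam = -Real.sqrt (∑ i, ((k i : ℝ)) ^ 2))) ∧
      ∃ n : ℤ, lam ^ 2 = (n : ℝ)) := by
  constructor
  · -- existence direction
    intro k hk lam hpm
    have hnn : (0:ℝ) ≤ ∑ i, ((k i : ℝ)) ^ 2 := by positivity
    have hsq : lam ^ 2 = ∑ i, ((k i : ℝ)) ^ 2 := by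
      rcases hpm with h | h <;> rw [h] <;>
        simp [Real.sq_sqrt hnn]
    have hpos : (0:ℝ) < ∑ i, ((k i : ℝ)) ^ 2 := by
      obtain ⟨i, hi⟩ := Function.ne_iff.1 hk
      have hi' : ((k i : ℝ)) ≠ 0 := by exact_mod_cast hi
      have h1 : (0:ℝ) < ((k i : ℝ)) ^ 2 := by positivity
      exact lt_of_lt_of_le h1 (Finset.single_le_sum
        (f := fun j => ((k j : ℝ)) ^ 2) (fun j _ => sq_nonneg _) (Finset.mem_univ i))
    have hlam : lam ≠ 0 := by
      intro h
      rw [h] at hsq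
      simp at hsq
      linarith [hsq ▸ hpos]
    by_cases h0 : (k 0 : ℝ) = 0 ∧ (k 1 : ℝ) = 0
    · exact exist_field k lam hsq hlam 1 0 0 (by rw [h0.1]; ring) (by simp)
    · refine exist_field k lam hsq hlam (-(k 1 : ℝ)) ((k 0 : ℝ)) 0 (by ring) ?_
      intro hc
      exact h0 ⟨hc.2.1, by have := hc.1; linarith⟩
  · -- converse direction
    rintro lam hlam ⟨v, ⟨hsm, hper⟩, hne, hcurl⟩
    obtain ⟨p, hp⟩ := Function.ne_iff.1 hne
    obtain ⟨i₀, hup⟩ := Function.ne_iff.1 hp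
    have hu : TorusFun (fun y => v y i₀) :=
      ⟨contDiff_pi.1 hsm i₀, fun x m => congrFun (hper x m) i₀⟩
    have hlap : ∀ x, pderiv3 (pderiv3 (fun y => v y i₀) 0) 0 x
        + pderiv3 (pderiv3 (fun y => v y i₀) 1) 1 x
        + pderiv3 (pderiv3 (fun y => v y i₀) 2) 2 x = -(lam ^ 2) * v x i₀ :=
      fun x => laplace3 v lam hsm hcurl hlam i₀ x
    obtain ⟨n1, n2, n3, hsq⟩ := eigen_square hu lam hlap p hup
    have hsum : ∑ i, (((![n1, n2, n3] : Fin 3 → ℤ) i : ℝ)) ^ 2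
        = (n1 : ℝ) ^ 2 + (n2 : ℝ) ^ 2 + (n3 : ℝ) ^ 2 := by
      rw [Fin.sum_univ_three]; simp
    constructor
    · refine ⟨![n1, n2, n3], ?_, ?_⟩
      · intro h
        have h1 : n1 = 0 := by simpa using congrFun h 0
        have h2 : n2 = 0 := by simpa using congrFun h 1
        have h3 : n3 = 0 := by simpa using congrFun h 2
        rw [h1, h2, h3] at hsq
        simp at hsq
        exact hlam hsq
      · have habs : Real.sqrt (∑ i, (((![n1, n2, n3] : Fin 3 → ℤ) i : ℝ)) ^ 2) = |lam| := by
          rw [hsum, ← hsq, Real.sqrt_sq_eq_abs]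
        rcases le_or_gt 0 lam with h | h
        · left; rw [habs, abs_of_nonneg h]
        · right; rw [habs, abs_of_neg h]; ring
    · exact ⟨n1 ^ 2 + n2 ^ 2 + n3 ^ 2, by push_cast; exact hsq⟩
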